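/- arXiv:2104.02861 — 2 statements merged into one kernel-verified Lean document; each statement's English description precedes it below -/
import Mathlib

section
/- Let A ∈ ℝ^{m×n}, let ω ∈ ℝ^m with ‖ω‖₂ ≤ δ, let x⋆ ∈ ℝⁿ with ‖x⋆‖₀ ≤ s, and let y = A x⋆ + ω. Fix a step size μ > 0 and an iterate x_t ∈ ℝⁿ such that Card(supp(x_t) \ supp(x⋆)) < s and ‖x_t − x⋆‖₂ ≤ Δ_t. If the continuation parameter is chosen as λ_t = (ξ_s · δ + ρ_{s,2s} · Δ_t / μ) / √s, then the proximal-gradient homotopy update x_{t+1} = argmin_x { λ_t μ ‖x‖₁ + ½‖x − y_t‖₂² }, where y_t = x_t − μ Aᵀ(A x_t − y), satisfies Card(supp(x_{t+1}) \ supp(x⋆)) < s. -/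
/-!
Suppose `x_{t+1}` had `s` coordinates outside `supp x⋆`, forming a set `S`. Coordinatewise
optimality of the proximal step forces `λ_t μ < sign((x_{t+1})_i) (y_t)_i` for `i ∈ S`, so the unit
vector `v` carrying these signs on `S` (scaled by `1/√s`) satisfies `√s λ_t μ < ⟨v, y_t⟩`. On the
other hand `y_t = x⋆ + (I - μAᵀA)(x_t - x⋆) + μAᵀω`, where `v ⊥ x⋆` and `x_t - x⋆` is `2s`-sparse,
so `⟨v, y_t⟩ ≤ ρ_{s,2s} Δ_t + μ ξ_s δ = √s λ_t μ` by the choice of `λ_t`.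
-/

open MeasureTheory ProbabilityTheory

noncomputable section

/-- Euclidean dot product on `Fin n → ℝ`. -/
def dotp {n : ℕ} (x y : Fin n → ℝ) : ℝ := ∑ i, x i * y i

/-- Euclidean (ℓ₂) norm. -/
def l2norm {n : ℕ} (x : Fin n → ℝ) : ℝ := Real.sqrt (∑ i, x i ^ 2)

/-- ℓ₁ norm. -/
def l1norm {n : ℕ} (x : Fin n → ℝ) : ℝ := ∑ i, |x i|

/-- Support of a vector as a finite set. -/
def suppF {n : ℕ} (x : Fin n → ℝ) : Finset (Fin n) :=
  Finset.univ.filter (fun i => x i ≠ 0)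

/-- ℓ₀ "norm": number of nonzero entries. -/
def l0 {n : ℕ} (x : Fin n → ℝ) : ℕ := (suppF x).card

/-- The Euclidean unit sphere `S^{n-1}`. -/
def unitSphere (n : ℕ) : Set (Fin n → ℝ) := {x | l2norm x = 1}

/-- The set of `s`-sparse vectors. -/
def sparseSet (n s : ℕ) : Set (Fin n → ℝ) := {x | l0 x ≤ s}

/-- Matrix-vector product, viewing `A : Fin m → Fin n → ℝ` as the rows of a matrix. -/
def mvec {m n : ℕ} (A : Fin m → Fin n → ℝ) (x : Fin n → ℝ) : Fin m → ℝ := fun i => dotp (A i) x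

/-- Transposed matrix-vector product `Aᵀ y`. -/
def tmvec {m n : ℕ} (A : Fin m → Fin n → ℝ) (y : Fin m → ℝ) : Fin n → ℝ := fun j => ∑ i, A i j * y i

/-- Restricted singular value `ρ(P,Q) = sup_{v∈P,u∈Q} ⟨v, (I - μ AᵀA) u⟩`. -/
def rsRho {m n : ℕ} (A : Fin m → Fin n → ℝ) (μ : ℝ) (P Q : Set (Fin n → ℝ)) : ℝ :=
  sSup {t | ∃ v ∈ P, ∃ u ∈ Q, t = dotp v (u - μ • tmvec A (mvec A u))}

/-- Restricted singular value `ξ(P) = sup_{v∈P} ⟨v, Aᵀ (w/‖w‖₂)⟩`. -/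
def rsXi {m n : ℕ} (A : Fin m → Fin n → ℝ) (w : Fin m → ℝ) (P : Set (Fin n → ℝ)) : ℝ :=
  sSup {t | ∃ v ∈ P, t = dotp v (tmvec A ((l2norm w)⁻¹ • w))}

/-- Gaussian complexity `γ(C) = E sup_{x ∈ C} |⟨g, x⟩|`, `g ∼ N(0, I_n)`. -/
def gcomp {n : ℕ} (C : Set (Fin n → ℝ)) : ℝ :=
  ∫ g, sSup ((fun x => |dotp g x|) '' C) ∂(Measure.pi fun _ : Fin n => gaussianReal 0 1)

/-- Sub-Gaussian (ψ₂) norm of a real random variable. -/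
def psi2 {Ω : Type*} [MeasureSpace Ω] (Z : Ω → ℝ) : ℝ :=
  sInf {t | 0 < t ∧ ∫ ω, Real.exp (Z ω ^ 2 / t ^ 2) ≤ 2}

/-- Sub-Gaussian (ψ₂) norm of a random vector. -/
def vpsi2 {Ω : Type*} [MeasureSpace Ω] {n : ℕ} (X : Ω → Fin n → ℝ) : ℝ :=
  sSup {t | ∃ u ∈ unitSphere n, t = psi2 (fun ω => dotp (X ω) u)}

/-- A random vector is centered and isotropic. -/
def centIso {Ω : Type*} [MeasureSpace Ω] {n : ℕ} (X : Ω → Fin n → ℝ) : Prop :=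
  (∀ j, ∫ ω, X ω j = 0) ∧ ∀ j k, ∫ ω, X ω j * X ω k = if j = k then (1 : ℝ) else 0

end

section Vectors

variable {n : ℕ}

lemma l2norm_eq_norm_toLp (x : Fin n → ℝ) : l2norm x = ‖WithLp.toLp 2 x‖ := by
  simp [l2norm, EuclideanSpace.norm_eq]

lemma l2norm_nonneg (x : Fin n → ℝ) : 0 ≤ l2norm x := Real.sqrt_nonneg _

lemma l2norm_sq (x : Fin n → ℝ) : l2norm x ^ 2 = ∑ i, x i ^ 2 :=
  Real.sq_sqrt (Finset.sum_nonneg fun _ _ => sq_nonneg _)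

lemma l2norm_eq_zero {x : Fin n → ℝ} : l2norm x = 0 ↔ x = 0 := by
  rw [l2norm_eq_norm_toLp, norm_eq_zero, WithLp.toLp_eq_zero]

lemma l2norm_smul (c : ℝ) (x : Fin n → ℝ) : l2norm (c • x) = |c| * l2norm x := by
  rw [l2norm_eq_norm_toLp, l2norm_eq_norm_toLp, WithLp.toLp_smul, norm_smul, Real.norm_eq_abs]

lemma abs_le_l2norm (x : Fin n → ℝ) (i : Fin n) : |x i| ≤ l2norm x := by
  simpa [l2norm_eq_norm_toLp] using PiLp.norm_apply_le (WithLp.toLp 2 x) i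

lemma l2norm_smul_inv_smul_self (x : Fin n → ℝ) : l2norm x • (l2norm x)⁻¹ • x = x := by
  rcases eq_or_ne (l2norm x) 0 with h | h
  · rw [l2norm_eq_zero.1 h, smul_zero, smul_zero]
  · exact smul_inv_smul₀ h x

lemma abs_le_one_of_mem_unitSphere {v : Fin n → ℝ} (hv : v ∈ unitSphere n) (i : Fin n) :
    |v i| ≤ 1 :=
  hv ▸ abs_le_l2norm v i

lemma inv_smul_mem_unitSphere {x : Fin n → ℝ} (hx : x ≠ 0) : (l2norm x)⁻¹ • x ∈ unitSphere n := by
  have : 0 < l2norm x := (l2norm_nonneg x).lt_of_ne' (l2norm_eq_zero.not.2 hx)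
  change l2norm _ = 1
  rw [l2norm_smul, abs_inv, abs_of_pos this, inv_mul_cancel₀ this.ne']

lemma neg_mem_unitSphere {v : Fin n → ℝ} (hv : v ∈ unitSphere n) : -v ∈ unitSphere n := by
  simpa [unitSphere, l2norm_eq_norm_toLp] using hv

lemma suppF_smul_subset (c : ℝ) (x : Fin n → ℝ) : suppF (c • x) ⊆ suppF x := by
  intro i
  simp +contextual [suppF]

lemma suppF_sub_subset (x y : Fin n → ℝ) : suppF (x - y) ⊆ suppF x ∪ suppF y := by
  intro i
  simp only [suppF, Finset.mem_union, Finset.mem_filter, Finset.mem_univ, true_and, Pi.sub_apply]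
  grind

lemma l0_sub_le (x y : Fin n → ℝ) : l0 (x - y) ≤ (suppF x \ suppF y).card + l0 y := by
  calc l0 (x - y) ≤ (suppF x ∪ suppF y).card := Finset.card_le_card (suppF_sub_subset x y)
    _ = (suppF x \ suppF y ∪ suppF y).card := by rw [Finset.sdiff_union_self_eq_union]
    _ ≤ _ := Finset.card_union_le _ _

lemma neg_mem_sparseSet {s : ℕ} {v : Fin n → ℝ} (hv : v ∈ sparseSet n s) : -v ∈ sparseSet n s := by
  simpa [sparseSet, l0, suppF] using hv

lemma dotp_eq_zero_of_disjoint {v x : Fin n → ℝ} (h : Disjoint (suppF v) (suppF x)) :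
    dotp v x = 0 := by
  refine Finset.sum_eq_zero fun i _ => ?_
  by_contra hne
  exact Finset.disjoint_left.mp h (show i ∈ suppF v by simpa [suppF] using left_ne_zero_of_mul hne)
    (by simpa [suppF] using right_ne_zero_of_mul hne)

lemma dotp_le_sum_abs {v : Fin n → ℝ} (hv : v ∈ unitSphere n) (z : Fin n → ℝ) :
    dotp v z ≤ ∑ i, |z i| :=
  Finset.sum_le_sum fun i _ => (le_abs_self _).trans <| by
    rw [abs_mul]; exact mul_le_of_le_one_left (abs_nonneg _) (abs_le_one_of_mem_unitSphere hv i)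

end Vectors

/-- No boundedness is needed: an empty or unbounded set of reals has `sSup = 0`. -/
lemma Real.sSup_nonneg_of_forall_neg_mem {T : Set ℝ} (hT : ∀ t ∈ T, -t ∈ T) : 0 ≤ sSup T := by
  by_cases hb : BddAbove T
  · rcases T.eq_empty_or_nonempty with rfl | ⟨t, ht⟩
    · rw [Real.sSup_empty]
    · linarith [le_csSup hb ht, le_csSup hb (hT t ht)]
  · rw [Real.sSup_of_not_bddAbove hb]

section RestrictedSingularValues

variable {m n : ℕ} (A : Fin m → Fin n → ℝ)

open Matrix

lemma dotp_eq_dotProduct (v z : Fin n → ℝ) : dotp v z = v ⬝ᵥ z := rfl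

lemma mvec_eq_mulVec (x : Fin n → ℝ) : mvec A x = of A *ᵥ x := rfl

lemma tmvec_eq_mulVec (y : Fin m → ℝ) : tmvec A y = (of A)ᵀ *ᵥ y := rfl

lemma sub_smul_tmvec_mvec_eq_mulVec (μ : ℝ) (u : Fin n → ℝ) :
    u - μ • tmvec A (mvec A u) = (1 - μ • ((of A)ᵀ * of A)) *ᵥ u := by
  rw [sub_mulVec, one_mulVec, smul_mulVec, ← mulVec_mulVec, tmvec_eq_mulVec, mvec_eq_mulVec]

lemma abs_mulVec_le {k : ℕ} (M : Matrix (Fin k) (Fin n) ℝ) {u : Fin n → ℝ}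
    (hu : u ∈ unitSphere n) (i : Fin k) : |(M *ᵥ u) i| ≤ ∑ j, |M i j| := by
  rw [mulVec, dotProduct]
  refine (Finset.abs_sum_le_sum_abs _ _).trans (Finset.sum_le_sum fun j _ => ?_)
  rw [abs_mul]
  exact mul_le_of_le_one_right (abs_nonneg _) (abs_le_one_of_mem_unitSphere hu j)

lemma bddAbove_rsRho_set (μ : ℝ) {P Q : Set (Fin n → ℝ)} (hP : P ⊆ unitSphere n)
    (hQ : Q ⊆ unitSphere n) :
    BddAbove {t | ∃ v ∈ P, ∃ u ∈ Q, t = dotp v (u - μ • tmvec A (mvec A u))} := by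
  set M : Matrix (Fin n) (Fin n) ℝ := 1 - μ • ((of A)ᵀ * of A)
  refine ⟨∑ i, ∑ j, |M i j|, ?_⟩
  rintro t ⟨v, hv, u, hu, rfl⟩
  rw [sub_smul_tmvec_mvec_eq_mulVec]
  exact (dotp_le_sum_abs (hP hv) _).trans (Finset.sum_le_sum fun i _ => abs_mulVec_le M (hQ hu) i)

lemma bddAbove_rsXi_set (w : Fin m → ℝ) {P : Set (Fin n → ℝ)} (hP : P ⊆ unitSphere n) :
    BddAbove {t | ∃ v ∈ P, t = dotp v (tmvec A ((l2norm w)⁻¹ • w))} := by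
  refine ⟨∑ i, |tmvec A ((l2norm w)⁻¹ • w) i|, ?_⟩
  rintro t ⟨v, hv, rfl⟩
  exact dotp_le_sum_abs (hP hv) _

lemma rsRho_nonneg (μ : ℝ) {P : Set (Fin n → ℝ)} (hP : ∀ v ∈ P, -v ∈ P) (Q : Set (Fin n → ℝ)) :
    0 ≤ rsRho A μ P Q := by
  refine Real.sSup_nonneg_of_forall_neg_mem ?_
  rintro t ⟨v, hv, u, hu, rfl⟩
  exact ⟨-v, hP v hv, u, hu, (neg_dotProduct _ _).symm⟩

lemma rsXi_nonneg (w : Fin m → ℝ) {P : Set (Fin n → ℝ)} (hP : ∀ v ∈ P, -v ∈ P) :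
    0 ≤ rsXi A w P := by
  refine Real.sSup_nonneg_of_forall_neg_mem ?_
  rintro t ⟨v, hv, rfl⟩
  exact ⟨-v, hP v hv, (neg_dotProduct _ _).symm⟩

lemma dotp_le_rsRho_mul_l2norm (μ : ℝ) {k : ℕ} {P : Set (Fin n → ℝ)} (hP : P ⊆ unitSphere n)
    {v u : Fin n → ℝ} (hv : v ∈ P) (hu : l0 u ≤ k) :
    dotp v (u - μ • tmvec A (mvec A u)) ≤
      rsRho A μ P (sparseSet n k ∩ unitSphere n) * l2norm u := by
  rcases eq_or_ne u 0 with rfl | hu0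
  · simp [tmvec_eq_mulVec, mvec_eq_mulVec, dotp_eq_dotProduct, l2norm]
  set u' := (l2norm u)⁻¹ • u
  have hu' : u' ∈ sparseSet n k ∩ unitSphere n :=
    ⟨(Finset.card_le_card (suppF_smul_subset _ u)).trans hu, inv_smul_mem_unitSphere hu0⟩
  have hle : dotp v (u' - μ • tmvec A (mvec A u')) ≤ rsRho A μ P (sparseSet n k ∩ unitSphere n) :=
    le_csSup (bddAbove_rsRho_set A μ hP Set.inter_subset_right) ⟨v, hv, u', hu', rfl⟩
  conv_lhs => rw [← l2norm_smul_inv_smul_self u]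
  rw [sub_smul_tmvec_mvec_eq_mulVec, mulVec_smul, ← sub_smul_tmvec_mvec_eq_mulVec,
    dotp_eq_dotProduct, dotProduct_smul, smul_eq_mul, mul_comm]
  exact mul_le_mul_of_nonneg_right hle (l2norm_nonneg u)

lemma dotp_tmvec_le_rsXi_mul_l2norm (w : Fin m → ℝ) {P : Set (Fin n → ℝ)} (hP : P ⊆ unitSphere n)
    {v : Fin n → ℝ} (hv : v ∈ P) : dotp v (tmvec A w) ≤ rsXi A w P * l2norm w := by
  have hle : dotp v (tmvec A ((l2norm w)⁻¹ • w)) ≤ rsXi A w P :=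
    le_csSup (bddAbove_rsXi_set A w hP) ⟨v, hv, rfl⟩
  conv_lhs => rw [← l2norm_smul_inv_smul_self w]
  rw [tmvec_eq_mulVec, mulVec_smul, ← tmvec_eq_mulVec, dotp_eq_dotProduct, dotProduct_smul,
    smul_eq_mul, mul_comm]
  exact mul_le_mul_of_nonneg_right hle (l2norm_nonneg w)

end RestrictedSingularValues

lemma Fintype.apply_le_of_forall_sum_le {ι M : Type*} [Fintype ι] [DecidableEq ι] [AddCommGroup M]
    [PartialOrder M] [IsOrderedAddMonoid M] {α : ι → Type*} (φ : ∀ i, α i → M) {x : ∀ i, α i}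
    (h : ∀ z : ∀ i, α i, ∑ i, φ i (x i) ≤ ∑ i, φ i (z i)) (i : ι) (t : α i) :
    φ i (x i) ≤ φ i t := by
  have hrest : ∑ j ∈ {i}ᶜ, φ j (Function.update x i t j) = ∑ j ∈ {i}ᶜ, φ j (x j) :=
    Finset.sum_congr rfl fun j hj => by rw [Function.update_of_ne (by simpa using hj)]
  have := h (Function.update x i t)
  rwa [Fintype.sum_eq_add_sum_compl i, Fintype.sum_eq_add_sum_compl i, Function.update_self,
    hrest, add_le_add_iff_right] at this

section ProximalStep

variable {n : ℕ}

def IsProxL1 (c : ℝ) (y x : Fin n → ℝ) : Prop :=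
  ∀ z, c * l1norm x + 1 / 2 * l2norm (x - y) ^ 2 ≤ c * l1norm z + 1 / 2 * l2norm (z - y) ^ 2

lemma l1_prox_objective_eq_sum (c : ℝ) (y z : Fin n → ℝ) :
    c * l1norm z + 1 / 2 * l2norm (z - y) ^ 2 = ∑ i, (c * |z i| + (z i - y i) ^ 2 / 2) := by
  simp only [l1norm, l2norm_sq, Finset.mul_sum, Finset.sum_add_distrib, Pi.sub_apply]
  ring_nf

lemma IsProxL1.mul_abs_add_sq_le {c : ℝ} {y x : Fin n → ℝ} (hx : IsProxL1 c y x) (i : Fin n) :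
    c * |x i| + x i ^ 2 / 2 ≤ x i * y i := by
  have := Fintype.apply_le_of_forall_sum_le (x := x) (fun i t => c * |t| + (t - y i) ^ 2 / 2)
    (fun z => by simpa only [l1_prox_objective_eq_sum] using hx z) i 0
  linarith

lemma IsProxL1.lt_sign_mul {c : ℝ} {y x : Fin n → ℝ} (hx : IsProxL1 c y x) {i : Fin n}
    (hi : x i ≠ 0) : c < SignType.sign (x i) * y i := by
  have h := hx.mul_abs_add_sq_le i
  have hpos : 0 < |x i| := abs_pos.2 hi
  have hxy : x i * y i = |x i| * (SignType.sign (x i) * y i) := by rw [← mul_assoc, abs_mul_sign]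
  rw [hxy, ← sq_abs] at h
  exact lt_of_mul_lt_mul_left (by nlinarith) hpos.le

end ProximalStep

lemma exists_unit_dotp_gt_of_lt_sign_mul {n s : ℕ} {S : Finset (Fin n)} (hS : S.card = s)
    (hs : 0 < s) {x y : Fin n → ℝ} {c : ℝ} (hSx : S ⊆ suppF x)
    (h : ∀ i ∈ S, c < SignType.sign (x i) * y i) :
    ∃ v, suppF v ⊆ S ∧ l2norm v = 1 ∧ √s * c < dotp v y := by
  have hsqrt : 0 < √(s : ℝ) := Real.sqrt_pos.2 (Nat.cast_pos.2 hs)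
  have hsign : ∀ i ∈ S, (SignType.sign (x i) : ℝ) ^ 2 = 1 := fun i hi => by
    have hxi : x i ≠ 0 := by simpa [suppF] using hSx hi
    rcases hxi.lt_or_gt with hxi | hxi <;> simp [hxi]
  refine ⟨fun i => if i ∈ S then SignType.sign (x i) / √s else 0, fun i => ?_, ?_, ?_⟩
  · simp +contextual [suppF]
  · rw [l2norm, ← Real.sqrt_one]
    congr 1
    simp only [ite_pow, div_pow, Real.sq_sqrt (Nat.cast_nonneg s), zero_pow two_ne_zero,
      Fintype.sum_ite_mem]
    rw [Finset.sum_congr rfl fun i hi => by rw [hsign i hi], Finset.sum_const, hS, nsmul_eq_mul]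
    field_simp
  · have hsum : √s * c = ∑ i ∈ S, c / √s := by
      rw [Finset.sum_const, hS, nsmul_eq_mul]
      field_simp
      rw [Real.sq_sqrt (Nat.cast_nonneg s), mul_comm]
    simp only [dotp, ite_mul, zero_mul, Fintype.sum_ite_mem, hsum]
    refine Finset.sum_lt_sum_of_nonempty (Finset.card_pos.1 (hS ▸ hs)) fun i hi => ?_
    rw [div_mul_eq_mul_div]
    exact div_lt_div_of_pos_right (h i hi) hsqrt

lemma gradient_step_eq {m n : ℕ} (A : Fin m → Fin n → ℝ) (w : Fin m → ℝ) (μ : ℝ)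
    (xstar xt : Fin n → ℝ) :
    xt - μ • tmvec A (mvec A xt - (mvec A xstar + w)) =
      xstar + ((xt - xstar) - μ • tmvec A (mvec A (xt - xstar))) + μ • tmvec A w := by
  simp only [tmvec_eq_mulVec, mvec_eq_mulVec, Matrix.mulVec_sub, Matrix.mulVec_add, smul_sub,
    smul_add]
  abel

lemma dotp_gradient_step_le {m n k : ℕ} (A : Fin m → Fin n → ℝ) (w : Fin m → ℝ) {μ : ℝ}
    (hμ : 0 ≤ μ) {P : Set (Fin n → ℝ)} (hP : P ⊆ unitSphere n) {v xstar xt : Fin n → ℝ}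
    (hv : v ∈ P) (hvx : Disjoint (suppF v) (suppF xstar)) (hu : l0 (xt - xstar) ≤ k) :
    dotp v (xt - μ • tmvec A (mvec A xt - (mvec A xstar + w))) ≤
      rsRho A μ P (sparseSet n k ∩ unitSphere n) * l2norm (xt - xstar) +
        μ * (rsXi A w P * l2norm w) := by
  rw [gradient_step_eq, dotp_eq_dotProduct, dotProduct_add, dotProduct_add, dotProduct_smul,
    smul_eq_mul, ← dotp_eq_dotProduct, ← dotp_eq_dotProduct, ← dotp_eq_dotProduct,
    dotp_eq_zero_of_disjoint hvx, zero_add]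
  exact add_le_add (dotp_le_rsRho_mul_l2norm A μ hP hv hu)
    (mul_le_mul_of_nonneg_left (dotp_tmvec_le_rsXi_mul_l2norm A w hP hv) hμ)

/-- Implicit constraint induced by `λ_t`, sparse case.
If `y = A x⋆ + w` with `‖x⋆‖₀ ≤ s`, `‖w‖₂ ≤ δ`, the current iterate satisfies
`Card(supp(x_t) \ supp(x⋆)) < s` and `‖x_t - x⋆‖₂ ≤ Δ_t`, and the continuation parameter is
`λ_t = (ξ_s δ + ρ_{s,2s} Δ_t/μ)/√s`, then the proximal-gradient homotopy update
`x_{t+1} = argmin_x { λ_t μ ‖x‖₁ + ½ ‖x - (x_t - μ Aᵀ(A x_t - y))‖₂² }` satisfies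
`Card(supp(x_{t+1}) \ supp(x⋆)) < s`. -/
theorem stmt0 {m n : ℕ} (A : Fin m → Fin n → ℝ) (w : Fin m → ℝ) (δ : ℝ)
    (xstar : Fin n → ℝ) (s : ℕ) (μ Δt lamt : ℝ) (xt xnext : Fin n → ℝ)
    (y : Fin m → ℝ) (hy : y = mvec A xstar + w)
    (hxs : l0 xstar ≤ s) (hw : l2norm w ≤ δ) (hμ : 0 < μ)
    (hsupp : (suppF xt \ suppF xstar).card < s)
    (hΔ : l2norm (xt - xstar) ≤ Δt)
    (hlam : lamt = (rsXi A w (sparseSet n s ∩ unitSphere n) * δ +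
        rsRho A μ (sparseSet n s ∩ unitSphere n) (sparseSet n (2 * s) ∩ unitSphere n) * Δt / μ)
        / Real.sqrt s)
    (hmin : ∀ z : Fin n → ℝ,
        lamt * μ * l1norm xnext + (1 / 2) * l2norm (xnext - (xt - μ • tmvec A (mvec A xt - y))) ^ 2 ≤
        lamt * μ * l1norm z + (1 / 2) * l2norm (z - (xt - μ • tmvec A (mvec A xt - y))) ^ 2) :
    (suppF xnext \ suppF xstar).card < s := by
  set P := sparseSet n s ∩ unitSphere n
  set ρ := rsRho A μ P (sparseSet n (2 * s) ∩ unitSphere n)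
  set ξ := rsXi A w P
  by_contra! hcard
  obtain ⟨S, hSsub, hScard⟩ := Finset.exists_subset_card_eq hcard
  have hs : 0 < s := (Nat.zero_le _).trans_lt hsupp
  obtain ⟨v, hvS, hv1, hlow⟩ := exists_unit_dotp_gt_of_lt_sign_mul hScard hs
    (hSsub.trans Finset.sdiff_subset) fun i hi =>
      IsProxL1.lt_sign_mul hmin (by simpa [suppF] using (Finset.mem_sdiff.1 (hSsub hi)).1)
  have hvP : v ∈ P := ⟨(Finset.card_le_card hvS).trans hScard.le, hv1⟩
  have hPneg : ∀ v ∈ P, -v ∈ P := fun v hv => ⟨neg_mem_sparseSet hv.1, neg_mem_unitSphere hv.2⟩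
  have hupp := dotp_gradient_step_le A w hμ.le Set.inter_subset_right hvP
    (Finset.disjoint_of_subset_left (hvS.trans hSsub) Finset.sdiff_disjoint)
    (by linarith [l0_sub_le xt xstar] : l0 (xt - xstar) ≤ 2 * s)
  rw [← hy] at hupp
  have hρΔ : ρ * l2norm (xt - xstar) ≤ ρ * Δt :=
    mul_le_mul_of_nonneg_left hΔ (rsRho_nonneg A μ hPneg _)
  have hξδ : μ * (ξ * l2norm w) ≤ μ * (ξ * δ) :=
    mul_le_mul_of_nonneg_left (mul_le_mul_of_nonneg_left hw (rsXi_nonneg A w hPneg)) hμ.le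
  have hlam' : √s * (lamt * μ) = ρ * Δt + μ * (ξ * δ) := by
    rw [hlam]
    field_simp
    ring
  linarith
end

section
/- Let X, X⋆ ∈ ℝ^{d×d} with rank(X) ≥ 2r, rank(X⋆) ≤ r, and r ≥ 1. Then there exists a matrix Z̄ ∈ ℝ^{d×d} with the following properties: rank(Z̄) = r, ‖Z̄‖_F = √r, ⟨Z̄, X⋆⟩ = 0, ⟨Z̄, X⟩ > 0, and ⟨Z̄, Z⟩ = r for every subgradient Z ∈ ∂‖X‖_*. -/
noncomputable section

/-- Frobenius (trace) inner product. -/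
def fip {d : ℕ} (X Y : Matrix (Fin d) (Fin d) ℝ) : ℝ := ∑ i, ∑ j, X i j * Y i j

/-- Frobenius norm. -/
def frob {d : ℕ} (X : Matrix (Fin d) (Fin d) ℝ) : ℝ := Real.sqrt (∑ i, ∑ j, X i j ^ 2)

/-- Nuclear norm: sum of the singular values (square roots of eigenvalues of `XᴴX`). -/
def nucNorm {d : ℕ} (X : Matrix (Fin d) (Fin d) ℝ) : ℝ :=
  ∑ i, Real.sqrt ((Matrix.isHermitian_conjTranspose_mul_self X).eigenvalues i)

/-- The subdifferential of the nuclear norm at `X` (as the subdifferential of a convex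
function with respect to the Frobenius inner product). -/
def nucSubdiff {d : ℕ} (X : Matrix (Fin d) (Fin d) ℝ) : Set (Matrix (Fin d) (Fin d) ℝ) :=
  {Z | ∀ Y, nucNorm X + fip Z (Y - X) ≤ nucNorm Y}

end

/-!
Take a partial singular value decomposition `X V = U Σ`, `Uᴴ X = Σ Vᴴ` along `2r` directions
with `Σ > 0`, and an `r`-frame `G` in `ℝ^{2r}` with `X⋆ᴴ U G = 0`, which exists because
`rank (X⋆ᴴ U) ≤ r`. Put `Z̄ = (U G)(V G)ᴴ`. Writing `X = U Σ Vᴴ + B` with `Uᴴ B = 0` and `B V = 0`,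
the nuclear norm splits as `‖U A Vᴴ + B‖_* = tr A + ‖B‖_*` for positive semidefinite `A`, so
`‖X + t Z̄‖_* = ‖X‖_* + t r` as long as `Σ + t G Gᴴ ⪰ 0`, in particular for `|t| ≤ min Σ`.
The subgradient inequality at `t = ± min Σ` then pins `⟨Z, Z̄⟩` to `r`.
-/

open Matrix Module
open scoped MatrixOrder

structure IsPartialSVD {m n k : Type*} [Fintype m] [Fintype n] [Fintype k] [DecidableEq k]
    (X : Matrix m n ℝ) (U : Matrix m k ℝ) (V : Matrix n k ℝ) (σ : k → ℝ) : Prop where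
  orthonormal_left : Uᴴ * U = 1
  orthonormal_right : Vᴴ * V = 1
  mul_eq : X * V = U * diagonal σ
  conjTranspose_mul_eq : Uᴴ * X = diagonal σ * Vᴴ

section Frobenius

variable {d : ℕ}

lemma fip_eq_trace (A B : Matrix (Fin d) (Fin d) ℝ) : fip A B = (Aᴴ * B).trace := by
  simp only [fip, trace, diag, mul_apply, conjTranspose_apply, star_trivial]
  exact Finset.sum_comm

lemma fip_comm (A B : Matrix (Fin d) (Fin d) ℝ) : fip A B = fip B A := by
  simp only [fip, mul_comm]

lemma fip_smul_right (A B : Matrix (Fin d) (Fin d) ℝ) (t : ℝ) :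
    fip A (t • B) = t * fip A B := by
  rw [fip_eq_trace, fip_eq_trace, Matrix.mul_smul, trace_smul, smul_eq_mul]

lemma fip_mul_conjTranspose_left {k : Type*} [Fintype k] (A B : Matrix (Fin d) k ℝ)
    (Y : Matrix (Fin d) (Fin d) ℝ) : fip (A * Bᴴ) Y = (Aᴴ * Y * B).trace := by
  rw [fip_eq_trace, conjTranspose_mul, conjTranspose_conjTranspose, Matrix.mul_assoc,
    trace_mul_comm]

lemma frob_eq_sqrt_trace (A : Matrix (Fin d) (Fin d) ℝ) : frob A = √(Aᴴ * A).trace := by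
  rw [frob, ← fip_eq_trace]
  simp only [fip, sq]

end Frobenius

section Sqrt

variable {n : Type*} [Fintype n] [DecidableEq n]

lemma trace_sqrt_eq_sum_sqrt_eigenvalues {A : Matrix n n ℝ} (hA : A.PosSemidef) :
    (CFC.sqrt A).trace = ∑ i, √(hA.1.eigenvalues i) := by
  rw [CFC.sqrt_eq_cfc, cfc_nnreal_eq_real _ A, hA.1.cfc_eq, IsHermitian.cfc,
    Unitary.conjStarAlgAut_apply, trace_mul_cycle, Unitary.coe_star_mul_self, Matrix.one_mul,
    trace_diagonal]
  refine Finset.sum_congr rfl fun i _ => ?_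
  simp [max_eq_left (hA.eigenvalues_nonneg i)]

lemma sqrt_mul_eq_zero_of_mul_eq_zero {k : Type*} [Fintype k] {A : Matrix n n ℝ}
    (hA : A.PosSemidef) {V : Matrix n k ℝ} (hAV : A * V = 0) : CFC.sqrt A * V = 0 := by
  have hS : (CFC.sqrt A)ᴴ = CFC.sqrt A := (CFC.sqrt_nonneg A).posSemidef.1
  rw [← conjTranspose_mul_self_eq_zero, conjTranspose_mul, hS, Matrix.mul_assoc,
    ← Matrix.mul_assoc (CFC.sqrt A), ← pow_two, CFC.sq_sqrt A hA.nonneg, hAV, Matrix.mul_zero]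

end Sqrt

section NuclearNorm

variable {d : ℕ}

lemma nucNorm_eq_trace_of_mul_self_eq {M R : Matrix (Fin d) (Fin d) ℝ} (hR : R.PosSemidef)
    (hRR : R * R = Mᴴ * M) : nucNorm M = R.trace := by
  have hM : (Mᴴ * M).PosSemidef := posSemidef_conjTranspose_mul_self M
  rw [← (CFC.sqrt_eq_iff _ _ hM.nonneg hR.nonneg).mpr hRR, trace_sqrt_eq_sum_sqrt_eigenvalues hM]
  rfl

lemma nucNorm_mul_mul_conjTranspose_add {k : Type*} [Fintype k] [DecidableEq k]
    {U V : Matrix (Fin d) k ℝ} {A : Matrix k k ℝ} {B : Matrix (Fin d) (Fin d) ℝ}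
    (hU : Uᴴ * U = 1) (hV : Vᴴ * V = 1) (hA : A.PosSemidef) (hUB : Uᴴ * B = 0)
    (hBV : B * V = 0) : nucNorm (U * A * Vᴴ + B) = A.trace + nucNorm B := by
  set S := CFC.sqrt (Bᴴ * B)
  have hBB : (Bᴴ * B).PosSemidef := posSemidef_conjTranspose_mul_self B
  have hS : S.PosSemidef := (CFC.sqrt_nonneg _).posSemidef
  have hSS : S * S = Bᴴ * B := by rw [← pow_two, CFC.sq_sqrt _ hBB.nonneg]
  have hSV : S * V = 0 :=
    sqrt_mul_eq_zero_of_mul_eq_zero hBB (by rw [Matrix.mul_assoc, hBV, Matrix.mul_zero])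
  have hVS : Vᴴ * S = 0 := by
    simpa only [conjTranspose_mul, hS.1.eq, conjTranspose_zero] using congrArg conjTranspose hSV
  have hBU : Bᴴ * U = 0 := by
    simpa only [conjTranspose_mul, conjTranspose_conjTranspose, conjTranspose_zero] using
      congrArg conjTranspose hUB
  have hR : (V * A * Vᴴ + S).PosSemidef := (hA.mul_mul_conjTranspose_same V).add hS
  -- all cross terms vanish, by `Uᴴ B = 0` and `√(Bᴴ B) V = 0`
  have hRR : (V * A * Vᴴ + S) * (V * A * Vᴴ + S) = (U * A * Vᴴ + B)ᴴ * (U * A * Vᴴ + B) := by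
    simp only [conjTranspose_add, conjTranspose_mul, conjTranspose_conjTranspose, hA.1.eq,
      Matrix.add_mul, Matrix.mul_add, Matrix.mul_assoc]
    rw [← Matrix.mul_assoc Vᴴ V, hV, ← Matrix.mul_assoc Uᴴ U, hU, ← Matrix.mul_assoc S V, hSV,
      hVS, hUB, ← Matrix.mul_assoc Bᴴ U, hBU, hSS]
  rw [nucNorm_eq_trace_of_mul_self_eq hR hRR, nucNorm_eq_trace_of_mul_self_eq hS hSS,
    trace_add, trace_mul_cycle, hV, Matrix.one_mul]

lemma IsPartialSVD.nucNorm_add_smul {k : Type*} [Fintype k] [DecidableEq k]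
    {X : Matrix (Fin d) (Fin d) ℝ} {U V : Matrix (Fin d) k ℝ} {σ : k → ℝ}
    (h : IsPartialSVD X U V σ) (hσ : ∀ i, 0 ≤ σ i) {P : Matrix k k ℝ} {t : ℝ}
    (hP : (diagonal σ + t • P).PosSemidef) :
    nucNorm (X + t • (U * P * Vᴴ)) = nucNorm X + t * P.trace := by
  set B := X - U * diagonal σ * Vᴴ
  have hUB : Uᴴ * B = 0 := by
    rw [Matrix.mul_sub, h.conjTranspose_mul_eq, ← Matrix.mul_assoc, ← Matrix.mul_assoc,
      h.orthonormal_left, Matrix.one_mul, sub_self]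
  have hBV : B * V = 0 := by
    rw [Matrix.sub_mul, h.mul_eq, Matrix.mul_assoc, h.orthonormal_right, Matrix.mul_one, sub_self]
  have hX : nucNorm X = (diagonal σ).trace + nucNorm B := by
    have := nucNorm_mul_mul_conjTranspose_add h.orthonormal_left h.orthonormal_right
      (PosSemidef.diagonal hσ) hUB hBV
    rwa [add_sub_cancel] at this
  calc nucNorm (X + t • (U * P * Vᴴ)) = nucNorm (U * (diagonal σ + t • P) * Vᴴ + B) := by
        rw [Matrix.mul_add, Matrix.add_mul, Matrix.mul_smul, Matrix.smul_mul, add_right_comm,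
          add_sub_cancel]
    _ = (diagonal σ + t • P).trace + nucNorm B :=
        nucNorm_mul_mul_conjTranspose_add h.orthonormal_left h.orthonormal_right hP hUB hBV
    _ = nucNorm X + t * P.trace := by
        rw [hX, trace_add, trace_smul, smul_eq_mul]
        ring

lemma fip_eq_of_mem_nucSubdiff {X W Z : Matrix (Fin d) (Fin d) ℝ} {a c : ℝ}
    (hZ : Z ∈ nucSubdiff X) (hc : 0 < c)
    (hpos : nucNorm (X + c • W) = nucNorm X + c * a)
    (hneg : nucNorm (X + (-c) • W) = nucNorm X + -c * a) : fip Z W = a := by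
  have hZ' : ∀ Y, nucNorm X + fip Z (Y - X) ≤ nucNorm Y := hZ
  have h₁ := hZ' (X + c • W)
  have h₂ := hZ' (X + (-c) • W)
  rw [add_sub_cancel_left, fip_smul_right, hpos] at h₁
  rw [add_sub_cancel_left, fip_smul_right, hneg] at h₂
  exact le_antisymm (le_of_mul_le_mul_left (by linarith) hc)
    (le_of_mul_le_mul_left (by linarith) hc)

lemma frob_mul_conjTranspose_of_orthonormal {k : Type*} [Fintype k] [DecidableEq k]
    {A B : Matrix (Fin d) k ℝ} (hA : Aᴴ * A = 1) (hB : Bᴴ * B = 1) :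
    frob (A * Bᴴ) = √(Fintype.card k) := by
  rw [frob_eq_sqrt_trace, conjTranspose_mul, conjTranspose_conjTranspose, Matrix.mul_assoc,
    ← Matrix.mul_assoc Aᴴ, hA, Matrix.one_mul, trace_mul_comm, hB, trace_one]

end NuclearNorm

section Orthonormal

variable {n k : Type*} [Fintype n] [Fintype k] [DecidableEq k]

lemma conjTranspose_mul_self_mul_eq_one {R : Type*} [CommRing R] [StarRing R] {l : Type*}
    [Fintype l] [DecidableEq l] {A : Matrix n k R} {B : Matrix k l R} (hA : Aᴴ * A = 1)
    (hB : Bᴴ * B = 1) : (A * B)ᴴ * (A * B) = 1 := by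
  rw [conjTranspose_mul, Matrix.mul_assoc, ← Matrix.mul_assoc Aᴴ, hA, Matrix.one_mul, hB]

lemma rank_mul_conjTranspose_of_orthonormal {R : Type*} [Field R] [StarRing R]
    {A B : Matrix n k R} (hA : Aᴴ * A = 1) (hB : Bᴴ * B = 1) :
    (A * Bᴴ).rank = Fintype.card k := by
  apply le_antisymm ((rank_mul_le_left _ _).trans A.rank_le_card_width)
  calc Fintype.card k = (Aᴴ * (A * Bᴴ) * B).rank := by
        rw [← Matrix.mul_assoc, hA, Matrix.one_mul, hB, rank_one]
    _ ≤ (Aᴴ * (A * Bᴴ)).rank := rank_mul_le_left _ _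
    _ ≤ (A * Bᴴ).rank := rank_mul_le_right _ _

variable [DecidableEq n]

lemma posSemidef_diagonal_add_smul_mul_conjTranspose {σ : n → ℝ} {G : Matrix n k ℝ} {c t : ℝ}
    (hG : Gᴴ * G = 1) (hc : 0 ≤ c) (hσ : ∀ i, c ≤ σ i) (ht : -c ≤ t) :
    (diagonal σ + t • (G * Gᴴ)).PosSemidef := by
  have hP : (1 - G * Gᴴ)ᴴ * (1 - G * Gᴴ) = 1 - G * Gᴴ := by
    simp only [conjTranspose_sub, conjTranspose_one, conjTranspose_mul,
      conjTranspose_conjTranspose, Matrix.sub_mul, Matrix.mul_sub, Matrix.one_mul,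
      Matrix.mul_one, Matrix.mul_assoc, ← Matrix.mul_assoc Gᴴ G, hG]
    abel
  have hdiag : diagonal σ = diagonal (fun i => σ i - c) + c • 1 := by
    rw [smul_one_eq_diagonal, diagonal_add]
    simp
  rw [show diagonal σ + t • (G * Gᴴ) =
      diagonal (fun i => σ i - c) + (c + t) • (G * Gᴴ) + c • (1 - G * Gᴴ) by
    rw [hdiag, smul_sub, add_smul]; abel]
  refine ((PosSemidef.diagonal fun i => sub_nonneg.2 (hσ i)).add
    ((posSemidef_self_mul_conjTranspose G).smul (by linarith))).add (PosSemidef.smul ?_ hc)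
  rw [← hP]
  exact posSemidef_conjTranspose_mul_self _

lemma mul_card_le_trace_conjTranspose_mul_diagonal_mul {σ : n → ℝ} {G : Matrix n k ℝ} {c : ℝ}
    (hG : Gᴴ * G = 1) (hσ : ∀ i, c ≤ σ i) :
    c * Fintype.card k ≤ (Gᴴ * diagonal σ * G).trace := by
  have hdiag : diagonal σ = diagonal (fun i => σ i - c) + c • 1 := by
    rw [smul_one_eq_diagonal, diagonal_add]
    simp
  rw [hdiag, Matrix.mul_add, Matrix.add_mul, Matrix.mul_smul, Matrix.mul_one, Matrix.smul_mul, hG,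
    trace_add, trace_smul, trace_one, smul_eq_mul, le_add_iff_nonneg_left]
  exact ((PosSemidef.diagonal fun i => sub_nonneg.2 (hσ i)).conjTranspose_mul_mul_same
    G).trace_nonneg

end Orthonormal

section Frame

variable {d : ℕ} {k l : Type*} [Fintype k] [DecidableEq k] [Fintype l]
  {X : Matrix (Fin d) (Fin d) ℝ} {U V : Matrix (Fin d) k ℝ} {σ : k → ℝ} {G : Matrix k l ℝ}

lemma IsPartialSVD.nucNorm_add_smul_frame [DecidableEq l] (h : IsPartialSVD X U V σ)
    (hG : Gᴴ * G = 1) {c t : ℝ} (hc : 0 ≤ c) (hσ : ∀ i, c ≤ σ i) (ht : -c ≤ t) :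
    nucNorm (X + t • (U * G * (V * G)ᴴ)) = nucNorm X + t * Fintype.card l := by
  have hZ : U * G * (V * G)ᴴ = U * (G * Gᴴ) * Vᴴ := by
    simp only [conjTranspose_mul, Matrix.mul_assoc]
  rw [hZ, h.nucNorm_add_smul (fun i => hc.trans (hσ i))
    (posSemidef_diagonal_add_smul_mul_conjTranspose hG hc hσ ht), trace_mul_comm, hG, trace_one]

lemma IsPartialSVD.fip_frame (h : IsPartialSVD X U V σ) :
    fip (U * G * (V * G)ᴴ) X = (Gᴴ * diagonal σ * G).trace := by
  rw [fip_mul_conjTranspose_left, conjTranspose_mul, Matrix.mul_assoc Gᴴ, h.conjTranspose_mul_eq]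
  simp only [Matrix.mul_assoc]
  rw [← Matrix.mul_assoc Vᴴ, h.orthonormal_right, Matrix.one_mul]

end Frame

lemma Matrix.IsHermitian.mul_eigenvectorUnitary {n : Type*} [Fintype n] [DecidableEq n]
    {A : Matrix n n ℝ} (hA : A.IsHermitian) :
    A * (hA.eigenvectorUnitary : Matrix n n ℝ) =
      (hA.eigenvectorUnitary : Matrix n n ℝ) * diagonal hA.eigenvalues := by
  conv_lhs => enter [1]; rw [hA.spectral_theorem, Unitary.conjStarAlgAut_apply]
  rw [Matrix.mul_assoc, Unitary.coe_star_mul_self, Matrix.mul_one]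
  rfl

lemma exists_orthonormal_eigenvectors_conjTranspose_mul_self {m n : Type*} [Fintype m]
    [Fintype n] [DecidableEq n] {k : ℕ} (X : Matrix m n ℝ) (hk : k ≤ X.rank) :
    ∃ (V : Matrix n (Fin k) ℝ) (ev : Fin k → ℝ), (∀ j, 0 < ev j) ∧ Vᴴ * V = 1 ∧
      Xᴴ * X * V = V * diagonal ev := by
  have hH := isHermitian_conjTranspose_mul_self X
  set W : Matrix n n ℝ := (hH.eigenvectorUnitary : Matrix n n ℝ)
  obtain ⟨e⟩ : Nonempty (Fin k ↪ {i // hH.eigenvalues i ≠ 0}) :=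
    Function.Embedding.nonempty_of_card_le <| by
      rwa [Fintype.card_fin, ← hH.rank_eq_card_non_zero_eigs, rank_conjTranspose_mul_self]
  set ι : Fin k → n := fun j => (e j).1
  have hι : Function.Injective ι := fun i j h => e.injective (Subtype.ext h)
  refine ⟨W.submatrix id ι, fun j => hH.eigenvalues (ι j), fun j =>
    ((posSemidef_conjTranspose_mul_self X).eigenvalues_nonneg _).lt_of_ne (e j).2.symm, ?_, ?_⟩
  · rw [conjTranspose_submatrix, ← submatrix_mul _ _ _ _ _ Function.bijective_id,
      ← star_eq_conjTranspose, Unitary.coe_star_mul_self, submatrix_one _ hι]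
  · ext i j
    have h := congrFun (congrFun hH.mul_eigenvectorUnitary i) (ι j)
    rw [mul_diagonal] at h ⊢
    exact h

lemma exists_partial_svd {m n : Type*} [Fintype m] [Fintype n] [DecidableEq n] {k : ℕ}
    (X : Matrix m n ℝ) (hk : k ≤ X.rank) :
    ∃ (U : Matrix m (Fin k) ℝ) (V : Matrix n (Fin k) ℝ) (σ : Fin k → ℝ), (∀ i, 0 < σ i) ∧
      IsPartialSVD X U V σ := by
  obtain ⟨V, ev, hev, hVV, hXXV⟩ := exists_orthonormal_eigenvectors_conjTranspose_mul_self X hk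
  set σ : Fin k → ℝ := fun j => √(ev j)
  have hσ : ∀ j, 0 < σ j := fun j => Real.sqrt_pos.mpr (hev j)
  set U := X * V * diagonal σ⁻¹
  have hσσ : diagonal σ⁻¹ * diagonal σ = 1 := by
    rw [diagonal_mul_diagonal, ← diagonal_one]
    exact congrArg diagonal (funext fun j => inv_mul_cancel₀ (hσ j).ne')
  have hUX : Uᴴ * X = diagonal σ * Vᴴ := by
    have hUh : Uᴴ * X = diagonal σ⁻¹ * (Xᴴ * X * V)ᴴ := by
      simp only [U, conjTranspose_mul, conjTranspose_conjTranspose, diagonal_conjTranspose,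
        star_trivial, Matrix.mul_assoc]
    rw [hUh, hXXV, conjTranspose_mul, diagonal_conjTranspose, star_trivial, ← Matrix.mul_assoc,
      diagonal_mul_diagonal]
    congr 2
    funext j
    rw [Pi.inv_apply, show ev j = σ j * σ j from (Real.mul_self_sqrt (hev j).le).symm]
    field_simp
  refine ⟨U, V, σ, hσ, ⟨?_, hVV, by rw [Matrix.mul_assoc, hσσ, Matrix.mul_one], hUX⟩⟩
  rw [← Matrix.mul_assoc, ← Matrix.mul_assoc, hUX, Matrix.mul_assoc _ Vᴴ, hVV, Matrix.mul_one,
    diagonal_mul_diagonal, ← diagonal_one]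
  exact congrArg diagonal (funext fun j => mul_inv_cancel₀ (hσ j).ne')

lemma conjTranspose_mul_self_eq_one_of_orthonormal {n ι : Type*} [Fintype n] [Fintype ι]
    [DecidableEq ι] {v : ι → EuclideanSpace ℝ n} (hv : Orthonormal ℝ v) :
    (of fun i j => v j i)ᴴ * of (fun i j => v j i) = 1 := by
  ext j j'
  rw [one_apply, ← orthonormal_iff_ite.mp hv j j']
  simp only [mul_apply, conjTranspose_apply, of_apply, star_trivial, PiLp.inner_apply,
    RCLike.inner_apply, conj_trivial, mul_comm]

lemma exists_orthonormal_mul_eq_zero {l n : Type*} [Fintype l] [Fintype n] [DecidableEq n]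
    {r : ℕ} (T : Matrix l n ℝ) (h : T.rank + r ≤ Fintype.card n) :
    ∃ G : Matrix n (Fin r) ℝ, Gᴴ * G = 1 ∧ T * G = 0 := by
  have hK : r ≤ finrank ℝ (LinearMap.ker (toLpLin 2 2 T)) := by
    have hrank : T.rank = finrank ℝ (LinearMap.range (toLpLin 2 2 T)) := by
      rw [toLpLin_eq_toLin]
      exact rank_eq_finrank_range_toLin T _ _
    have := (toLpLin 2 2 T).finrank_range_add_finrank_ker
    rw [finrank_euclideanSpace] at this
    omega
  set b := stdOrthonormalBasis ℝ (LinearMap.ker (toLpLin 2 2 T))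
  set v : Fin r → EuclideanSpace ℝ n := fun j => b (Fin.castLE hK j)
  have hv : Orthonormal ℝ v :=
    (b.orthonormal.comp _ (Fin.castLE_injective hK)).comp_linearIsometry (Submodule.subtypeₗᵢ _)
  refine ⟨of fun i j => v j i, conjTranspose_mul_self_eq_one_of_orthonormal hv, ?_⟩
  ext i j
  have := congrArg (fun y => y i) (LinearMap.mem_ker.mp (b (Fin.castLE hK j)).2)
  simp only [ofLp_toLpLin, toLin'_apply, mulVec, dotProduct, WithLp.ofLp_zero] at this
  exact this

/-- if `rank(X) ≥ 2r`, `rank(X⋆) ≤ r` and `r ≥ 1`, there is a matrix `Z̄`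
with `rank(Z̄) = r`, `‖Z̄‖_F = √r`, `⟨Z̄, X⋆⟩ = 0`, `⟨Z̄, X⟩ > 0`, and `⟨Z̄, Z⟩ = r`
for every subgradient `Z ∈ ∂‖X‖_*`. -/
theorem stmt9 {d : ℕ} (X Xstar : Matrix (Fin d) (Fin d) ℝ) (r : ℕ) (hr : 1 ≤ r)
    (hX : 2 * r ≤ X.rank) (hXstar : Xstar.rank ≤ r) :
    ∃ Zbar : Matrix (Fin d) (Fin d) ℝ,
      Zbar.rank = r ∧
      frob Zbar = Real.sqrt r ∧
      fip Zbar Xstar = 0 ∧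
      0 < fip Zbar X ∧
      ∀ Z ∈ nucSubdiff X, fip Zbar Z = r := by
  obtain ⟨U, V, σ, hσ, hsvd⟩ := exists_partial_svd X hX
  have : NeZero (2 * r) := ⟨by omega⟩
  obtain ⟨i₀, hi₀⟩ := Finite.exists_min σ
  obtain ⟨G, hG, hXstarG⟩ := exists_orthonormal_mul_eq_zero (Xstarᴴ * U) (r := r) <| by
    have := (rank_mul_le_left Xstarᴴ U).trans (rank_conjTranspose Xstar).le
    simp only [Fintype.card_fin]
    omega
  have hUG := conjTranspose_mul_self_mul_eq_one hsvd.orthonormal_left hG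
  have hVG := conjTranspose_mul_self_mul_eq_one hsvd.orthonormal_right hG
  have hray (t : ℝ) (ht : -σ i₀ ≤ t) :
      nucNorm (X + t • (U * G * (V * G)ᴴ)) = nucNorm X + t * r := by
    simpa using hsvd.nucNorm_add_smul_frame hG (hσ i₀).le hi₀ ht
  refine ⟨U * G * (V * G)ᴴ, ?_, ?_, ?_, ?_, fun Z hZ => ?_⟩
  · simpa using rank_mul_conjTranspose_of_orthonormal hUG hVG
  · simpa using frob_mul_conjTranspose_of_orthonormal hUG hVG
  · have : (U * G)ᴴ * Xstar = 0 := by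
      simpa [Matrix.mul_assoc] using congrArg conjTranspose hXstarG
    rw [fip_mul_conjTranspose_left, this, Matrix.zero_mul, trace_zero]
  · rw [hsvd.fip_frame]
    refine lt_of_lt_of_le ?_ (mul_card_le_trace_conjTranspose_mul_diagonal_mul hG hi₀)
    simpa using mul_pos (hσ i₀) (by exact_mod_cast hr : (0 : ℝ) < r)
  · rw [fip_comm]
    exact fip_eq_of_mem_nucSubdiff hZ (hσ i₀) (hray _ (by linarith [hσ i₀])) (hray _ le_rfl)
end
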